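/- arXiv:0902.4877 — 8 statements merged into one kernel-verified Lean document; each statement's English description precedes it below -/
import Mathlib

section
/- Let d ≥ 1, let k be a positive integer with k ≤ d, and let Φ be a linear map on the d×d complex matrices. Then Φ is k-positive if and only if for every orthogonal projection q ∈ M_d(ℂ) (q = q* = q²) of rank k, the linear map on matrices indexed by Fin d × Fin d given by x ↦ (id_d ⊗ Φ)((q ⊗ 1_d) x (q ⊗ 1_d)) sends positive semidefinite matrices to positive semidefinite matrices, where q ⊗ 1_d denotes the Kronecker product of q with the d×d identity matrix. -/
open Matrix Kronecker
open scoped ComplexOrder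

noncomputable section

abbrev Mat (d : ℕ) := Matrix (Fin d) (Fin d) ℂ

abbrev MatMap (d : ℕ) := Mat d →ₗ[ℂ] Mat d

abbrev Mat2 (d : ℕ) := Matrix (Fin d × Fin d) (Fin d × Fin d) ℂ

/-- The blockwise action of `id_I ⊗ Φ` on matrices indexed by `I × Fin d`:
`((id ⊗ Φ) M)((i,a),(j,b))` is the `(a,b)` entry of `Φ` applied to the `(i,j)` block of `M`. -/
def tensId {d : ℕ} (I : Type) (Φ : Mat d → Mat d)
    (M : Matrix (I × Fin d) (I × Fin d) ℂ) : Matrix (I × Fin d) (I × Fin d) ℂ :=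
  Matrix.of fun p q => Φ (Matrix.of fun a b => M (p.1, a) (q.1, b)) p.2 q.2

/-- `Φ` is `k`-positive: `id_{Fin k} ⊗ Φ` sends PSD matrices to PSD matrices. -/
def kPositive (d k : ℕ) (Φ : Mat d → Mat d) : Prop :=
  ∀ M : Matrix (Fin k × Fin d) (Fin k × Fin d) ℂ,
    M.PosSemidef → (tensId (Fin k) Φ M).PosSemidef

/-- `Φ` is completely positive: `k`-positive for every positive integer `k`. -/
def CompletelyPositive (d : ℕ) (Φ : Mat d → Mat d) : Prop :=
  ∀ k : ℕ, 0 < k → kPositive d k Φ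

/-- `Φ` is `k`-superpositive: a finite sum of maps `Ad_{a_i} : x ↦ aᵢ* x aᵢ`
with `rank aᵢ ≤ k`. -/
def kSuperpositive (d k : ℕ) (Φ : Mat d → Mat d) : Prop :=
  ∃ (n : ℕ) (a : Fin n → Mat d),
    (∀ i, (a i).rank ≤ k) ∧ ∀ x, Φ x = ∑ i, (a i)ᴴ * x * a i

/-- The Choi matrix of `Φ`: `C_Φ((i,a),(j,b)) = Φ(e_{ij})(a,b)`. -/
def choi {d : ℕ} (Φ : Mat d → Mat d) : Mat2 d :=
  Matrix.of fun p q => Φ (Matrix.single p.1 q.1 (1 : ℂ)) p.2 q.2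

/-- `v` has Schmidt rank at most `k`: `v = ∑_{l<k} φ_l ⊗ ψ_l`. -/
def SchmidtRankLE (d k : ℕ) (v : Fin d × Fin d → ℂ) : Prop :=
  ∃ φ ψ : Fin k → Fin d → ℂ, v = fun p => ∑ l, φ l p.1 * ψ l p.2

/-- `A` is `k`-block positive: Hermitian and `⟨v, A v⟩ ≥ 0` for every `v` of
Schmidt rank at most `k`. -/
def kBlockPositive (d k : ℕ) (A : Mat2 d) : Prop :=
  A.IsHermitian ∧ ∀ v : Fin d × Fin d → ℂ, SchmidtRankLE d k v → 0 ≤ star v ⬝ᵥ A *ᵥ v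

/-- `b` is `k`-separable: a finite sum of rank-one matrices `v v*` with `v` of
Schmidt rank at most `k`. -/
def kSeparable (d k : ℕ) (b : Mat2 d) : Prop :=
  ∃ (n : ℕ) (v : Fin n → (Fin d × Fin d → ℂ)),
    (∀ i, SchmidtRankLE d k (v i)) ∧ b = ∑ i, Matrix.vecMulVec (v i) (star (v i))

/-- `Φ` preserves Hermiticity. -/
def HermPreserving (d : ℕ) (Φ : Mat d → Mat d) : Prop :=
  ∀ x : Mat d, x.IsHermitian → (Φ x).IsHermitian

/-- The map `Ad_a : x ↦ a* x a`. -/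
def adFun {d : ℕ} (a : Mat d) : Mat d → Mat d := fun x => aᴴ * x * a

/-- Elementary tensor of two vectors: `(φ ⊗ ψ)(i,a) = φ(i)·ψ(a)`. -/
def tensorVec {d : ℕ} (φ ψ : Fin d → ℂ) : Fin d × Fin d → ℂ := fun p => φ p.1 * ψ p.2

/-- The unnormalized maximally entangled vector `ψ₊ = ∑ᵢ eᵢ ⊗ eᵢ`. -/
def psiPlus (d : ℕ) : Fin d × Fin d → ℂ := fun p => if p.1 = p.2 then 1 else 0

/-- `P₊ = ψ₊ ψ₊*`. -/
def Pplus (d : ℕ) : Mat2 d := Matrix.vecMulVec (psiPlus d) (star (psiPlus d))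

/-- The transpose, as a linear map on matrices. -/
def transLM (d : ℕ) : MatMap d where
  toFun x := xᵀ
  map_add' x y := by simp
  map_smul' c x := by simp

/-!
Every rank-`k` orthogonal projection factors as `q = V Vᴴ` through an isometry
`V : ℂᵏ → ℂᵈ` (`Vᴴ V = 1`); conversely, for `k ≤ d` such isometries exist and `V Vᴴ` is a
rank-`k` projection. The map `id ⊗ Φ` commutes with conjugation by `V ⊗ 1`, and
`(q ⊗ 1) x (q ⊗ 1) = (V ⊗ 1) ((Vᴴ ⊗ 1) x (V ⊗ 1)) (Vᴴ ⊗ 1)`. Since conjugation preserves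
positivity and `Vᴴ ⊗ 1` undoes `V ⊗ 1`, positivity of `id_k ⊗ Φ` on the compressions
`(Vᴴ ⊗ 1) x (V ⊗ 1)` is the same as positivity of `id_d ⊗ Φ` on the images `(q ⊗ 1) x (q ⊗ 1)`.
-/

namespace Matrix

variable {𝕜 : Type*} [RCLike 𝕜] {m n : Type*}

lemma conjTranspose_submatrix_mul_submatrix_of_injective [Fintype m] [DecidableEq m]
    [DecidableEq n] {U : Matrix m m 𝕜} (hU : Uᴴ * U = 1) {f : n → m}
    (hf : Function.Injective f) :
    (U.submatrix id f)ᴴ * U.submatrix id f = 1 := by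
  rw [conjTranspose_submatrix, ← submatrix_mul _ _ _ _ _ Function.bijective_id, hU,
    submatrix_one f hf]

lemma exists_conjTranspose_mul_self_eq_one_of_le {k d : ℕ} (hkd : k ≤ d) :
    ∃ V : Matrix (Fin d) (Fin k) 𝕜, Vᴴ * V = 1 :=
  ⟨(1 : Matrix (Fin d) (Fin d) 𝕜).submatrix id (Fin.castLE hkd),
    conjTranspose_submatrix_mul_submatrix_of_injective (by simp) (Fin.castLE_injective hkd)⟩

lemma isIdempotentElem_mul_conjTranspose [Fintype m] [Fintype n] [DecidableEq n]
    {V : Matrix m n 𝕜} (hV : Vᴴ * V = 1) : IsIdempotentElem (V * Vᴴ) := by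
  rw [IsIdempotentElem, Matrix.mul_assoc, ← Matrix.mul_assoc Vᴴ, hV, Matrix.one_mul]

lemma rank_mul_conjTranspose_of_conjTranspose_mul_self_eq_one [Fintype m] [Fintype n]
    [DecidableEq n] {V : Matrix m n 𝕜} (hV : Vᴴ * V = 1) :
    (V * Vᴴ).rank = Fintype.card n := by
  rw [rank_self_mul_conjTranspose, ← rank_conjTranspose_mul_self, hV, rank_one]

lemma one_submatrix_subtype_mul_conjTranspose [DecidableEq m] (p : m → Prop) [DecidablePred p]
    [Fintype {i // p i}] :
    (1 : Matrix m m 𝕜).submatrix id (Subtype.val : {i // p i} → m) *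
        ((1 : Matrix m m 𝕜).submatrix id (Subtype.val : {i // p i} → m))ᴴ =
      diagonal fun i => if p i then (1 : 𝕜) else 0 := by
  ext i j
  simp only [mul_apply, submatrix_apply, conjTranspose_apply, one_apply, id, diagonal_apply]
  by_cases hi : p i
  · rw [Finset.sum_eq_single ⟨i, hi⟩ (fun s _ hs => by simp [Ne.symm (Subtype.ext_iff.not.mp hs)])
      (by simp)]
    by_cases hij : i = j
    · simp [← hij, hi]
    · simp [hij, Ne.symm hij]
  · refine (Finset.sum_eq_zero fun s _ => ?_).trans (by simp [hi])
    have : s.1 ≠ i := fun h => hi (h ▸ s.2)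
    simp [Ne.symm this]

namespace IsHermitian

variable [Fintype m] [DecidableEq m] {q : Matrix m m 𝕜}

lemma eigenvalues_eq_zero_or_one (hq : q.IsHermitian) (hqq : q * q = q) (i : m) :
    hq.eigenvalues i = 0 ∨ hq.eigenvalues i = 1 := by
  set v : m → 𝕜 := ⇑(hq.eigenvectorBasis i)
  have hv : q *ᵥ v = hq.eigenvalues i • v := hq.mulVec_eigenvectorBasis i
  have hv0 : v ≠ 0 := (WithLp.ofLp_eq_zero 2).ne.2 (hq.eigenvectorBasis.orthonormal.ne_zero i)
  refine IsIdempotentElem.iff_eq_zero_or_one.mp (smul_left_injective ℝ hv0 ?_)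
  change (hq.eigenvalues i * hq.eigenvalues i) • v = hq.eigenvalues i • v
  rw [mul_smul, ← hv, ← mulVec_smul, ← hv, mulVec_mulVec, hqq]

/-- The columns of `V` are the eigenvectors of `q` for the eigenvalue `1`. -/
lemma exists_isometry_mul_conjTranspose_eq (hq : q.IsHermitian) (hqq : q * q = q) :
    ∃ V : Matrix m {i // hq.eigenvalues i ≠ 0} 𝕜, Vᴴ * V = 1 ∧ V * Vᴴ = q := by
  set U : Matrix m m 𝕜 := (hq.eigenvectorUnitary : Matrix m m 𝕜)
  set P := (1 : Matrix m m 𝕜).submatrix id (Subtype.val : {i // hq.eigenvalues i ≠ 0} → m)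
  have hU : Uᴴ * U = 1 := Unitary.coe_star_mul_self hq.eigenvectorUnitary
  have hUP : U * P = U.submatrix id Subtype.val := by
    simpa using mul_submatrix_one (Equiv.refl m) Subtype.val U
  have hD : diagonal (RCLike.ofReal ∘ hq.eigenvalues) = P * Pᴴ := by
    rw [one_submatrix_subtype_mul_conjTranspose]
    congr 1
    funext i
    rcases hq.eigenvalues_eq_zero_or_one hqq i with h | h <;> simp [h]
  refine ⟨U.submatrix id Subtype.val,
    conjTranspose_submatrix_mul_submatrix_of_injective hU Subtype.val_injective, ?_⟩
  calc U.submatrix id Subtype.val * (U.submatrix id Subtype.val)ᴴ = U * (P * Pᴴ) * Uᴴ := by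
        rw [← hUP, conjTranspose_mul]
        simp only [Matrix.mul_assoc]
    _ = q := by rw [← hD]; exact hq.spectral_theorem.symm

lemma exists_isometry_of_rank_eq [Fintype n] [DecidableEq n] (hq : q.IsHermitian)
    (hqq : q * q = q) (hr : q.rank = Fintype.card n) :
    ∃ V : Matrix m n 𝕜, Vᴴ * V = 1 ∧ V * Vᴴ = q := by
  obtain ⟨V, hV, hVq⟩ := hq.exists_isometry_mul_conjTranspose_eq hqq
  let e : n ≃ {i // hq.eigenvalues i ≠ 0} :=
    Fintype.equivOfCardEq (hr.symm.trans hq.rank_eq_card_non_zero_eigs)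
  refine ⟨V.submatrix id e, ?_, ?_⟩
  · rw [conjTranspose_submatrix, ← submatrix_mul _ _ _ _ _ Function.bijective_id, hV,
      submatrix_one_equiv]
  · rw [conjTranspose_submatrix, submatrix_mul_equiv, submatrix_id_id, hVq]

end IsHermitian

section KroneckerOne

variable {I J o : Type} [Fintype J] [Fintype o] [DecidableEq o]

lemma mul_kronecker_one {K : Type} (A : Matrix I J 𝕜) (B : Matrix J K 𝕜) :
    (A * B) ⊗ₖ (1 : Matrix o o 𝕜) = (A ⊗ₖ (1 : Matrix o o 𝕜)) * (B ⊗ₖ (1 : Matrix o o 𝕜)) := by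
  rw [← mul_kronecker_mul, Matrix.one_mul]

lemma mul_conjTranspose_kronecker_one_conj [Fintype I] (V : Matrix I J 𝕜) (X : Matrix (I × o) (I × o) 𝕜) :
    ((V * Vᴴ) ⊗ₖ (1 : Matrix o o 𝕜)) * X * ((V * Vᴴ) ⊗ₖ (1 : Matrix o o 𝕜)) =
      (V ⊗ₖ (1 : Matrix o o 𝕜)) *
          ((Vᴴ ⊗ₖ (1 : Matrix o o 𝕜)) * X * (V ⊗ₖ (1 : Matrix o o 𝕜))) *
        (Vᴴ ⊗ₖ (1 : Matrix o o 𝕜)) := by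
  simp only [mul_kronecker_one, Matrix.mul_assoc]

lemma kronecker_one_conj_cancel [Fintype I] [DecidableEq J] {V : Matrix I J 𝕜} (hV : Vᴴ * V = 1)
    (M : Matrix (J × o) (J × o) 𝕜) :
    (Vᴴ ⊗ₖ (1 : Matrix o o 𝕜)) * ((V ⊗ₖ (1 : Matrix o o 𝕜)) * M * (Vᴴ ⊗ₖ (1 : Matrix o o 𝕜))) *
        (V ⊗ₖ (1 : Matrix o o 𝕜)) = M := by
  have hcancel : (Vᴴ ⊗ₖ (1 : Matrix o o 𝕜)) * (V ⊗ₖ (1 : Matrix o o 𝕜)) = 1 := by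
    rw [← mul_kronecker_one, hV, one_kronecker_one]
  rw [← Matrix.mul_assoc, ← Matrix.mul_assoc, hcancel, Matrix.one_mul, Matrix.mul_assoc, hcancel,
    Matrix.mul_one]

lemma PosSemidef.kronecker_one_mul_mul_conjTranspose [Fintype I] {M : Matrix (J × o) (J × o) 𝕜}
    (hM : M.PosSemidef) (V : Matrix I J 𝕜) :
    ((V ⊗ₖ (1 : Matrix o o 𝕜)) * M * (Vᴴ ⊗ₖ (1 : Matrix o o 𝕜))).PosSemidef := by
  have h := hM.mul_mul_conjTranspose_same (V ⊗ₖ (1 : Matrix o o 𝕜))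
  rwa [conjTranspose_kronecker, conjTranspose_one] at h

end KroneckerOne

end Matrix

section TensId

variable {d : ℕ} {I J : Type} [Fintype J]

lemma tensId_kronecker_one_mul_mul (Φ : MatMap d) (V : Matrix I J ℂ) (W : Matrix J I ℂ)
    (M : Matrix (J × Fin d) (J × Fin d) ℂ) :
    tensId I Φ ((V ⊗ₖ (1 : Mat d)) * M * (W ⊗ₖ (1 : Mat d))) =
      (V ⊗ₖ (1 : Mat d)) * tensId J Φ M * (W ⊗ₖ (1 : Mat d)) := by
  ext ⟨i, a⟩ ⟨j, b⟩
  have hblock :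
      (Matrix.of fun a' b' => ((V ⊗ₖ (1 : Mat d)) * M * (W ⊗ₖ (1 : Mat d))) (i, a') (j, b')) =
        ∑ p, ∑ q, (V i p * W q j) • (Matrix.of fun a b => M (p, a) (q, b)) := by
    ext a' b'
    simp only [Matrix.of_apply, Matrix.mul_apply, Fintype.sum_prod_type, kroneckerMap_apply,
      Matrix.one_apply, Matrix.sum_apply, Matrix.smul_apply, smul_eq_mul, mul_ite, ite_mul,
      mul_zero, zero_mul, mul_one, Finset.sum_ite_eq, Finset.sum_ite_eq', Finset.mem_univ,
      if_true, Finset.sum_mul]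
    rw [Finset.sum_comm]
    exact Finset.sum_congr rfl fun p _ => Finset.sum_congr rfl fun q _ => by ring
  change (Φ _) a b = _
  rw [hblock]
  simp only [map_sum, _root_.map_smul, Matrix.mul_apply, Fintype.sum_prod_type,
    kroneckerMap_apply, Matrix.one_apply, Matrix.sum_apply, Matrix.smul_apply, smul_eq_mul,
    mul_ite, ite_mul, mul_zero, zero_mul, mul_one, Finset.sum_ite_eq, Finset.sum_ite_eq',
    Finset.mem_univ, if_true, tensId, Matrix.of_apply, Finset.sum_mul]
  rw [Finset.sum_comm]
  exact Finset.sum_congr rfl fun p _ => Finset.sum_congr rfl fun q _ => by ring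

lemma Matrix.PosSemidef.tensId_kronecker_one_mul_mul_conjTranspose [Fintype I] {Φ : MatMap d}
    {M : Matrix (J × Fin d) (J × Fin d) ℂ} (hM : (tensId J Φ M).PosSemidef) (V : Matrix I J ℂ) :
    (tensId I Φ ((V ⊗ₖ (1 : Mat d)) * M * (Vᴴ ⊗ₖ (1 : Mat d)))).PosSemidef := by
  rw [tensId_kronecker_one_mul_mul]
  exact hM.kronecker_one_mul_mul_conjTranspose V

lemma posSemidef_tensId_kronecker_one_conj_iff [Fintype I] [DecidableEq J] {Φ : MatMap d}
    {V : Matrix I J ℂ} (hV : Vᴴ * V = 1) (M : Matrix (J × Fin d) (J × Fin d) ℂ) :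
    (tensId I Φ ((V ⊗ₖ (1 : Mat d)) * M * (Vᴴ ⊗ₖ (1 : Mat d)))).PosSemidef ↔
      (tensId J Φ M).PosSemidef := by
  refine ⟨fun h => ?_, fun h => h.tensId_kronecker_one_mul_mul_conjTranspose V⟩
  simpa [kronecker_one_conj_cancel hV] using h.tensId_kronecker_one_mul_mul_conjTranspose Vᴴ

end TensId

theorem stmt0_general (d k : ℕ) (hkd : k ≤ d) (Φ : MatMap d) :
    kPositive d k ⇑Φ ↔
      ∀ q : Mat d, q.IsHermitian → q * q = q → q.rank = k →
        ∀ x : Mat2 d, x.PosSemidef →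
          (tensId (Fin d) ⇑Φ
            ((q ⊗ₖ (1 : Mat d)) * x * (q ⊗ₖ (1 : Mat d)))).PosSemidef := by
  constructor
  · intro hpos q hq hqq hr x hx
    obtain ⟨V, hV, rfl⟩ := hq.exists_isometry_of_rank_eq hqq (by rw [hr, Fintype.card_fin])
    rw [mul_conjTranspose_kronecker_one_conj, posSemidef_tensId_kronecker_one_conj_iff hV]
    exact hpos _ (by simpa using hx.kronecker_one_mul_mul_conjTranspose Vᴴ)
  · intro h M hM
    obtain ⟨V, hV⟩ := exists_conjTranspose_mul_self_eq_one_of_le (𝕜 := ℂ) hkd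
    have hx := h (V * Vᴴ) (isHermitian_mul_conjTranspose_self V)
      (isIdempotentElem_mul_conjTranspose hV)
      (by rw [rank_mul_conjTranspose_of_conjTranspose_mul_self_eq_one hV, Fintype.card_fin])
      _ (hM.kronecker_one_mul_mul_conjTranspose V)
    rwa [mul_conjTranspose_kronecker_one_conj, kronecker_one_conj_cancel hV,
      posSemidef_tensId_kronecker_one_conj_iff hV] at hx

/-- `Φ` is `k`-positive iff for every orthogonal projection `q` of rank `k`,
the map `x ↦ (id_d ⊗ Φ)((q ⊗ 1) x (q ⊗ 1))` sends PSD matrices to PSD matrices. -/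
theorem stmt0 (d k : ℕ) (hd : 1 ≤ d) (hk : 1 ≤ k) (hkd : k ≤ d) (Φ : MatMap d) :
    kPositive d k ⇑Φ ↔
      ∀ q : Mat d, q.IsHermitian → q * q = q → q.rank = k →
        ∀ x : Mat2 d, x.PosSemidef →
          (tensId (Fin d) ⇑Φ
            ((q ⊗ₖ (1 : Mat d)) * x * (q ⊗ₖ (1 : Mat d)))).PosSemidef :=
  stmt0_general d k hkd Φ
end
end

section
/- (Generalized Jamiołkowski–Choi theorem) Let d ≥ 1, let k ≥ 1, and let Φ be a Hermiticity-preserving linear map on the d×d complex matrices. Then Φ is k-positive if and only if its Choi matrix C_Φ is k-block positive. -/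
open Matrix Kronecker
open scoped ComplexOrder

noncomputable section

/-!
Everything rests on one identity: for `u, w : Fin k × Fin d → ℂ`,
`⟨w, (id ⊗ Φ)(u u*) w⟩ = ⟨v, C_Φ v⟩` with `v = ∑_l ū_l ⊗ w_l`, a vector of Schmidt rank `≤ k`,
and every such vector arises this way. Hence `k`-positivity, tested on `u u*`, gives block
positivity of `C_Φ`; conversely a PSD matrix is a sum of rank-one matrices `u u*` and `id ⊗ Φ`
is linear. Hermiticity holds on both sides because a Hermiticity-preserving `Φ` commutes with
`ᴴ`, and `C_Φ = (id ⊗ Φ)(P₊)`.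
-/

open ComplexStarModule in
theorem LinearMap.map_star_of_map_isSelfAdjoint {E F : Type*} [AddCommGroup E] [Module ℂ E]
    [StarAddMonoid E] [StarModule ℂ E] [AddCommGroup F] [Module ℂ F] [StarAddMonoid F]
    [StarModule ℂ F] (f : E →ₗ[ℂ] F) (hf : ∀ x, IsSelfAdjoint x → IsSelfAdjoint (f x)) (x : E) :
    f (star x) = star (f x) := by
  rw [← realPart_add_I_smul_imaginaryPart x]
  simp [(hf _ (ℜ x).2).star_eq, (hf _ (ℑ x).2).star_eq, (ℜ x).2.star_eq, (ℑ x).2.star_eq]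

theorem HermPreserving.map_conjTranspose {d : ℕ} {Φ : MatMap d} (hΦ : HermPreserving d Φ)
    (x : Mat d) : Φ xᴴ = (Φ x)ᴴ :=
  Φ.map_star_of_map_isSelfAdjoint hΦ x

theorem LinearMap.eq_sum_smul_map_single {m n R M : Type*} [Fintype m] [Fintype n]
    [DecidableEq m] [DecidableEq n] [CommSemiring R] [AddCommMonoid M] [Module R M]
    (Φ : Matrix m n R →ₗ[R] M) (x : Matrix m n R) :
    Φ x = ∑ i, ∑ j, x i j • Φ (Matrix.single i j 1) := by
  conv_lhs => rw [matrix_eq_sum_single x]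
  simp only [map_sum, ← _root_.map_smul, smul_single, smul_eq_mul, mul_one]

section tensId

variable {I : Type} {d : ℕ}

theorem tensId_isHermitian {Φ : Mat d → Mat d} (hΦ : ∀ x, Φ xᴴ = (Φ x)ᴴ)
    {M : Matrix (I × Fin d) (I × Fin d) ℂ} (hM : M.IsHermitian) :
    (tensId I Φ M).IsHermitian := by
  ext p q
  have hblock : (of fun a b => M (q.1, a) (p.1, b))ᴴ = of fun a b => M (p.1, a) (q.1, b) := by
    ext a b
    simp [← hM.apply (p.1, a)]
  simp [tensId, ← hblock, hΦ]

theorem tensId_sum {ι : Type} (Φ : MatMap d) (s : Finset ι)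
    (M : ι → Matrix (I × Fin d) (I × Fin d) ℂ) :
    tensId I Φ (∑ r ∈ s, M r) = ∑ r ∈ s, tensId I Φ (M r) := by
  ext p q
  have hblock : (of fun a b => ∑ r ∈ s, M r (p.1, a) (q.1, b))
      = ∑ r ∈ s, of fun a b => M r (p.1, a) (q.1, b) := by
    ext a b
    simp only [Matrix.sum_apply, of_apply]
  simp only [tensId, of_apply, Matrix.sum_apply]
  rw [hblock, map_sum, Matrix.sum_apply]

theorem dotProduct_tensId_mulVec [Fintype I] (Φ : Mat d → Mat d)
    (M : Matrix (I × Fin d) (I × Fin d) ℂ) (w w' : I × Fin d → ℂ) :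
    w ⬝ᵥ tensId I Φ M *ᵥ w' = ∑ l, ∑ m,
      (fun a => w (l, a)) ⬝ᵥ Φ (of fun a b => M (l, a) (m, b)) *ᵥ (fun b => w' (m, b)) := by
  simp only [dotProduct, mulVec, tensId, of_apply, Fintype.sum_prod_type, Finset.mul_sum]
  exact Finset.sum_congr rfl fun l _ => Finset.sum_comm

end tensId

theorem choi_eq_tensId_Pplus {d : ℕ} (Φ : Mat d → Mat d) :
    choi Φ = tensId (Fin d) Φ (Pplus d) := by
  ext p q
  simp only [choi, tensId, Pplus, psiPlus, Matrix.single, vecMulVec_apply, of_apply, Pi.star_apply]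
  congr 2
  ext a b
  split_ifs <;> simp_all

theorem dotProduct_choi_mulVec_tensorVec {d : ℕ} (Φ : MatMap d) (φ ψ φ' ψ' : Fin d → ℂ) :
    tensorVec φ ψ ⬝ᵥ choi Φ *ᵥ tensorVec φ' ψ' = ψ ⬝ᵥ Φ (vecMulVec φ φ') *ᵥ ψ' := by
  rw [Φ.eq_sum_smul_map_single]
  simp only [Matrix.sum_mulVec, dotProduct_sum, smul_mulVec, dotProduct_smul, vecMulVec_apply,
    smul_eq_mul]
  simp only [dotProduct, mulVec, Fintype.sum_prod_type, tensorVec, choi, of_apply, Finset.mul_sum]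
  refine Finset.sum_congr rfl fun i _ => Finset.sum_comm.trans ?_
  refine Finset.sum_congr rfl fun j _ => Finset.sum_congr rfl fun a _ =>
    Finset.sum_congr rfl fun b _ => by ring

section sumTensorVec

variable {I : Type} [Fintype I] {d : ℕ}

def sumTensorVec (u w : I × Fin d → ℂ) : Fin d × Fin d → ℂ :=
  fun p => ∑ l, u (l, p.1) * w (l, p.2)

theorem sumTensorVec_eq_sum_tensorVec (u w : I × Fin d → ℂ) :
    sumTensorVec u w = ∑ l, tensorVec (fun i => u (l, i)) (fun a => w (l, a)) := by
  ext p
  simp only [sumTensorVec, tensorVec, Finset.sum_apply]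

theorem star_sumTensorVec (u w : I × Fin d → ℂ) :
    star (sumTensorVec u w) = sumTensorVec (star u) (star w) := by
  ext p
  simp only [sumTensorVec, Pi.star_apply, star_sum, star_mul']

theorem schmidtRankLE_sumTensorVec {k : ℕ} (u w : Fin k × Fin d → ℂ) :
    SchmidtRankLE d k (sumTensorVec u w) :=
  ⟨fun l i => u (l, i), fun l a => w (l, a), rfl⟩

theorem dotProduct_choi_mulVec_sumTensorVec (Φ : MatMap d) (u w u' w' : I × Fin d → ℂ) :
    sumTensorVec u w ⬝ᵥ choi Φ *ᵥ sumTensorVec u' w' =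
      w ⬝ᵥ tensId I Φ (vecMulVec u u') *ᵥ w' := by
  simp only [sumTensorVec_eq_sum_tensorVec, dotProduct_tensId_mulVec, mulVec_sum, sum_dotProduct,
    dotProduct_sum, dotProduct_choi_mulVec_tensorVec]
  exact Finset.sum_comm

end sumTensorVec

theorem stmt1_general (d k : ℕ) (Φ : MatMap d)
    (hΦ : HermPreserving d ⇑Φ) :
    kPositive d k ⇑Φ ↔ kBlockPositive d k (choi ⇑Φ) := by
  have hΦ' := hΦ.map_conjTranspose
  constructor
  · intro hpos
    refine ⟨?_, ?_⟩
    · rw [choi_eq_tensId_Pplus]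
      exact tensId_isHermitian hΦ' (posSemidef_vecMulVec_self_star _).isHermitian
    · rintro _ ⟨φ, ψ, rfl⟩
      let u : Fin k × Fin d → ℂ := fun p => φ p.1 p.2
      let w : Fin k × Fin d → ℂ := fun p => ψ p.1 p.2
      change 0 ≤ star (sumTensorVec u w) ⬝ᵥ choi Φ *ᵥ sumTensorVec u w
      rw [star_sumTensorVec, dotProduct_choi_mulVec_sumTensorVec]
      exact (hpos _ (posSemidef_vecMulVec_star_self u)).dotProduct_mulVec_nonneg w
  · intro hbp M hM
    refine .of_dotProduct_mulVec_nonneg (tensId_isHermitian hΦ' hM.isHermitian) fun w => ?_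
    obtain ⟨n, a, rfl⟩ := posSemidef_iff_eq_sum_vecMulVec.mp hM
    rw [tensId_sum, sum_mulVec, dotProduct_sum]
    refine Finset.sum_nonneg fun r _ => ?_
    have hstar : sumTensorVec (a r) (star w) = star (sumTensorVec (star (a r)) w) := by
      rw [star_sumTensorVec, star_star]
    rw [← dotProduct_choi_mulVec_sumTensorVec, hstar]
    exact hbp.2 _ (schmidtRankLE_sumTensorVec _ _)

/-- Generalized Jamiołkowski–Choi theorem: a Hermiticity-preserving map is
`k`-positive iff its Choi matrix is `k`-block positive. -/
theorem stmt1 (d k : ℕ) (hd : 1 ≤ d) (hk : 1 ≤ k) (Φ : MatMap d)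
    (hΦ : HermPreserving d ⇑Φ) :
    kPositive d k ⇑Φ ↔ kBlockPositive d k (choi ⇑Φ) :=
  stmt1_general d k Φ hΦ
end
end

section
/- (Choi's theorem) Let d ≥ 1 and let Φ be a Hermiticity-preserving linear map on the d×d complex matrices. Then Φ is completely positive (i.e., k-positive for every positive integer k) if and only if its Choi matrix C_Φ is positive semidefinite. -/
open Matrix Kronecker
open scoped ComplexOrder

noncomputable section

/-!
The Choi matrix is `(id ⊗ Φ)(P₊)` for the positive semidefinite `P₊ = ψ₊ψ₊*`, so `d`-positivity
already forces `C_Φ ≥ 0`. Conversely, write `C_Φ = BᴴB`; reshaping the rows of `B` into `d × d`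
matrices `K_r` gives a Kraus decomposition `Φ(x) = ∑ K_rᴴ x K_r`, hence
`(id ⊗ Φ)(M) = ∑ (1 ⊗ K_r)ᴴ M (1 ⊗ K_r)`, which is positive semidefinite whenever `M` is.
-/

lemma apply_eq_sum_choi {d : ℕ} (Φ : MatMap d) (x : Mat d) (a b : Fin d) :
    Φ x a b = ∑ i, ∑ j, x i j * choi ⇑Φ (i, a) (j, b) := by
  have hx : x = ∑ i, ∑ j, x i j • single i j (1 : ℂ) := by
    simpa [smul_single] using x.matrix_eq_sum_single
  conv_lhs => rw [hx]
  simp only [map_sum, map_smul, Matrix.sum_apply, Matrix.smul_apply, smul_eq_mul, choi, of_apply]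

lemma tensId_Pplus {d : ℕ} (Φ : Mat d → Mat d) : tensId (Fin d) Φ (Pplus d) = choi Φ := by
  ext ⟨i, a⟩ ⟨j, b⟩
  simp only [tensId, choi, of_apply]
  congr 2
  ext m n
  simp [Pplus, psiPlus, vecMulVec_apply, ← ite_and, and_comm]

lemma tensId_eq_sum_kronecker {d : ℕ} {I R : Type} [Fintype I] [DecidableEq I] [Fintype R]
    {Φ : Mat d → Mat d} {K : R → Mat d} (hΦ : ∀ x, Φ x = ∑ r, (K r)ᴴ * x * K r)
    (M : Matrix (I × Fin d) (I × Fin d) ℂ) :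
    tensId I Φ M = ∑ r, ((1 : Matrix I I ℂ) ⊗ₖ K r)ᴴ * M * ((1 : Matrix I I ℂ) ⊗ₖ K r) := by
  ext ⟨i, a⟩ ⟨j, b⟩
  simp [tensId, hΦ, Matrix.sum_apply, mul_apply, Fintype.sum_prod_type, one_apply,
    apply_ite (starRingEnd ℂ)]

lemma apply_eq_sum_of_choi_eq {d : ℕ} {R : Type} [Fintype R] {Φ : MatMap d}
    {B : Matrix R (Fin d × Fin d) ℂ} (hB : choi ⇑Φ = Bᴴ * B) (x : Mat d) :
    Φ x = ∑ r, (of fun a b => B r (a, b))ᴴ * x * of fun a b => B r (a, b) := by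
  ext a b
  simp only [apply_eq_sum_choi, hB, Matrix.sum_apply, mul_apply, conjTranspose_apply, of_apply,
    Finset.mul_sum, Finset.sum_mul]
  rw [Finset.sum_comm_cycle]
  refine Fintype.sum_congr _ _ fun r => ?_
  rw [Finset.sum_comm]
  exact Fintype.sum_congr _ _ fun m => Fintype.sum_congr _ _ fun n => by ring

lemma posSemidef_tensId_of_eq_sum {d : ℕ} {I R : Type} [Fintype I] [DecidableEq I] [Fintype R]
    {Φ : Mat d → Mat d} {K : R → Mat d} (hΦ : ∀ x, Φ x = ∑ r, (K r)ᴴ * x * K r)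
    {M : Matrix (I × Fin d) (I × Fin d) ℂ} (hM : M.PosSemidef) :
    (tensId I Φ M).PosSemidef := by
  rw [tensId_eq_sum_kronecker hΦ]
  exact posSemidef_sum _ fun r _ => hM.conjTranspose_mul_mul_same _

lemma choi_posSemidef_of_kPositive {d : ℕ} {Φ : Mat d → Mat d} (hΦ : kPositive d d Φ) :
    (choi Φ).PosSemidef :=
  tensId_Pplus Φ ▸ hΦ _ (posSemidef_vecMulVec_self_star _)

lemma completelyPositive_of_choi_posSemidef {d : ℕ} {Φ : MatMap d} (hC : (choi ⇑Φ).PosSemidef) :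
    CompletelyPositive d ⇑Φ := by
  obtain ⟨B, hB⟩ : ∃ B : Mat2 d, choi ⇑Φ = Bᴴ * B := by
    open scoped MatrixOrder in exact CStarAlgebra.nonneg_iff_eq_star_mul_self.mp hC.nonneg
  exact fun _ _ _ hM => posSemidef_tensId_of_eq_sum (apply_eq_sum_of_choi_eq hB) hM

theorem stmt2_general (d : ℕ) (hd : 1 ≤ d) (Φ : MatMap d) :
    CompletelyPositive d ⇑Φ ↔ (choi ⇑Φ).PosSemidef :=
  ⟨fun h => choi_posSemidef_of_kPositive (h d hd), completelyPositive_of_choi_posSemidef⟩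

/-- Choi's theorem: a Hermiticity-preserving map is completely positive iff
its Choi matrix is positive semidefinite. -/
theorem stmt2 (d : ℕ) (hd : 1 ≤ d) (Φ : MatMap d) (hΦ : HermPreserving d ⇑Φ) :
    CompletelyPositive d ⇑Φ ↔ (choi ⇑Φ).PosSemidef :=
  stmt2_general d hd Φ
end
end

section
/- Let d ≥ 1 and let a ∈ M_d(ℂ) with r = rank(a). Then there exist vectors φ_1,…,φ_r and ψ_1,…,ψ_r in ℂ^d, with the φ_l pairwise orthogonal and the ψ_l pairwise orthogonal, such that the Choi matrix of the map Ad_a satisfies C_{Ad_a} = α α*, where α = ∑_{l=1}^r φ_l ⊗ ψ_l and α α* is the rank-one matrix with entries α(i,a')·conj(α(j,b')). Conversely, for any r ≤ d and any pairwise orthogonal families φ_1,…,φ_r and ψ_1,…,ψ_r of nonzero vectors in ℂ^d, setting α = ∑_{l=1}^r φ_l ⊗ ψ_l, there exists a ∈ M_d(ℂ) with C_{Ad_a} = α α*. -/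
open Matrix Kronecker
open scoped ComplexOrder

noncomputable section

/-!
Entrywise `C_{Ad_a}((i,x),(j,y)) = conj (a i x) * a j y`, so `C_{Ad_a} = α α*` with `α` the entrywise
conjugate of `a` read as a vector of `ℂ^d ⊗ ℂ^d`; the converse is then just reshaping `conj α` into a
matrix. The forward direction is a singular value decomposition of `a`: if the unitary `U`
diagonalizes `aᴴ a`, the columns of `a U` are pairwise orthogonal, those belonging to the eigenvalue
`0` vanish, and `a = (a U) Uᴴ` leaves exactly `rank a` nonzero terms.
-/

theorem Fintype.sum_equiv_subtype_of_eq_zero {ι κ M : Type*} [Fintype ι] [Fintype κ]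
    [AddCommMonoid M] {p : κ → Prop} (e : ι ≃ {k // p k}) (f : κ → M)
    (hf : ∀ k, ¬ p k → f k = 0) : ∑ k, f k = ∑ i, f (e i) := by
  classical
  rw [e.sum_comp (fun k => f k), ← Finset.sum_subtype (Finset.univ.filter p) (by simp),
    Finset.sum_filter_of_ne fun k _ hk => not_not.mp (mt (hf k) hk)]

namespace Matrix

theorem mul_eq_sum_vecMulVec {R l m n : Type*} [NonUnitalNonAssocSemiring R] [Fintype l]
    (M : Matrix m l R) (N : Matrix l n R) : M * N = ∑ k, vecMulVec (Mᵀ k) (N k) := by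
  ext i j
  simp [mul_apply, vecMulVec_apply, Matrix.sum_apply]

section RCLike

variable {𝕜 m n : Type*} [RCLike 𝕜] [Fintype m]

theorem pairwise_star_transpose_dotProduct_eq_zero [DecidableEq n] {D : n → 𝕜}
    {M : Matrix m n 𝕜} (hM : Mᴴ * M = diagonal D) :
    Pairwise fun k k' => star (Mᵀ k) ⬝ᵥ Mᵀ k' = 0 := by
  intro k k' hk
  have := congrFun (congrFun hM k) k'
  rwa [mul_apply', diagonal_apply_ne _ hk] at this

theorem transpose_apply_eq_zero_of_diagonal_eq_zero [DecidableEq n] {D : n → 𝕜}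
    {M : Matrix m n 𝕜} (hM : Mᴴ * M = diagonal D) {k : n} (hk : D k = 0) : Mᵀ k = 0 := by
  have := congrFun (congrFun hM k) k
  rw [mul_apply', diagonal_apply_eq, hk] at this
  exact dotProduct_star_self_eq_zero.mp this

theorem exists_orthogonal_sum_vecMulVec [Fintype n] (a : Matrix m n 𝕜) :
    ∃ (φ : Fin a.rank → m → 𝕜) (ψ : Fin a.rank → n → 𝕜),
      Pairwise (fun l l' => star (φ l) ⬝ᵥ φ l' = 0) ∧
      Pairwise (fun l l' => star (ψ l) ⬝ᵥ ψ l' = 0) ∧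
      a = ∑ l, vecMulVec (φ l) (star (ψ l)) := by
  classical
  have hA := isHermitian_conjTranspose_mul_self a
  set U : Matrix n n 𝕜 := (hA.eigenvectorUnitary : Matrix n n 𝕜)
  have hU : Uᴴ * U = diagonal 1 :=
    (mem_unitaryGroup_iff'.mp hA.eigenvectorUnitary.2).trans diagonal_one.symm
  have haU : (a * U)ᴴ * (a * U) = diagonal (RCLike.ofReal ∘ hA.eigenvalues) := by
    rw [← hA.conjStarAlgAut_star_eigenvectorUnitary, Unitary.conjStarAlgAut_star_apply,
      conjTranspose_mul]
    simp only [U, star_eq_conjTranspose, Matrix.mul_assoc]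
  have hrank : Fintype.card {k // hA.eigenvalues k ≠ 0} = a.rank := by
    rw [← hA.rank_eq_card_non_zero_eigs, rank_conjTranspose_mul_self]
  set e := (Fintype.equivFinOfCardEq hrank).symm
  have he : Function.Injective fun l => (e l : n) := Subtype.val_injective.comp e.injective
  refine ⟨fun l => (a * U)ᵀ (e l), fun l => Uᵀ (e l),
    (pairwise_star_transpose_dotProduct_eq_zero haU).comp_of_injective he,
    (pairwise_star_transpose_dotProduct_eq_zero hU).comp_of_injective he, ?_⟩
  calc a = a * U * Uᴴ := by
        rw [Matrix.mul_assoc, ← star_eq_conjTranspose,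
          mem_unitaryGroup_iff.mp hA.eigenvectorUnitary.2, Matrix.mul_one]
    _ = ∑ k, vecMulVec ((a * U)ᵀ k) (star (Uᵀ k)) := mul_eq_sum_vecMulVec _ _
    _ = ∑ l, vecMulVec ((a * U)ᵀ (e l)) (star (Uᵀ (e l))) :=
        Fintype.sum_equiv_subtype_of_eq_zero e _ fun k hk => by
          rw [transpose_apply_eq_zero_of_diagonal_eq_zero haU (by simpa using hk),
            zero_vecMulVec]

theorem pairwise_star_star_dotProduct_eq_zero {ι : Type*} {φ : ι → m → 𝕜}
    (hφ : Pairwise fun l l' => star (φ l) ⬝ᵥ φ l' = 0) :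
    Pairwise fun l l' => star (star (φ l)) ⬝ᵥ star (φ l') = 0 := fun l l' h => by
  dsimp only
  rw [star_dotProduct_star, dotProduct_comm, hφ h, star_zero]

end RCLike

end Matrix

theorem choi_adFun_eq_vecMulVec {d : ℕ} {a : Mat d} {α : Fin d × Fin d → ℂ}
    (h : (fun p => a p.1 p.2) = star α) : choi (adFun a) = vecMulVec α (star α) := by
  obtain rfl : α = star fun p => a p.1 p.2 := by rw [h, star_star]
  ext ⟨i, x⟩ ⟨j, y⟩
  simp [choi, adFun, mul_apply, vecMulVec_apply, single_apply, ite_and]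

theorem sum_vecMulVec_apply_eq_star_sum_tensorVec {d r : ℕ} (φ ψ : Fin r → Fin d → ℂ) :
    (fun p => (∑ l, vecMulVec (φ l) (star (ψ l))) p.1 p.2) =
      star (∑ l, tensorVec (star (φ l)) (ψ l)) := by
  ext ⟨i, x⟩
  simp [Matrix.sum_apply, tensorVec, vecMulVec_apply]

theorem stmt3_general (d : ℕ) (a : Mat d) :
    (∃ φ ψ : Fin a.rank → Fin d → ℂ,
      (∀ l m, l ≠ m → star (φ l) ⬝ᵥ φ m = 0) ∧
      (∀ l m, l ≠ m → star (ψ l) ⬝ᵥ ψ m = 0) ∧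
      choi (adFun a) =
        Matrix.vecMulVec (∑ l, tensorVec (φ l) (ψ l))
          (star (∑ l, tensorVec (φ l) (ψ l)))) ∧
    (∀ r : ℕ, r ≤ d → ∀ φ ψ : Fin r → Fin d → ℂ,
      (∀ l, φ l ≠ 0) → (∀ l, ψ l ≠ 0) →
      (∀ l m, l ≠ m → star (φ l) ⬝ᵥ φ m = 0) →
      (∀ l m, l ≠ m → star (ψ l) ⬝ᵥ ψ m = 0) →
      ∃ b : Mat d, choi (adFun b) =
        Matrix.vecMulVec (∑ l, tensorVec (φ l) (ψ l))
          (star (∑ l, tensorVec (φ l) (ψ l)))) := by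
  refine ⟨?_, fun r _ φ ψ _ _ _ _ => ?_⟩
  · obtain ⟨φ, ψ, hφ, hψ, ha⟩ := a.exists_orthogonal_sum_vecMulVec
    refine ⟨fun l => star (φ l), ψ, pairwise_star_star_dotProduct_eq_zero hφ, hψ,
      choi_adFun_eq_vecMulVec ?_⟩
    rw [← sum_vecMulVec_apply_eq_star_sum_tensorVec, ← ha]
  · exact ⟨of fun i x => star (∑ l, tensorVec (φ l) (ψ l)) (i, x), choi_adFun_eq_vecMulVec rfl⟩

/-- the Choi matrix of `Ad_a` is `α α*` with
`α = ∑_{l<rank a} φ_l ⊗ ψ_l`, the `φ_l` pairwise orthogonal and the `ψ_l` pairwise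
orthogonal; conversely every such `α α*` (with nonzero orthogonal families, `r ≤ d`)
arises as the Choi matrix of some `Ad_a`. -/
theorem stmt3 (d : ℕ) (hd : 1 ≤ d) (a : Mat d) :
    (∃ φ ψ : Fin a.rank → Fin d → ℂ,
      (∀ l m, l ≠ m → star (φ l) ⬝ᵥ φ m = 0) ∧
      (∀ l m, l ≠ m → star (ψ l) ⬝ᵥ ψ m = 0) ∧
      choi (adFun a) =
        Matrix.vecMulVec (∑ l, tensorVec (φ l) (ψ l))
          (star (∑ l, tensorVec (φ l) (ψ l)))) ∧
    (∀ r : ℕ, r ≤ d → ∀ φ ψ : Fin r → Fin d → ℂ,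
      (∀ l, φ l ≠ 0) → (∀ l, ψ l ≠ 0) →
      (∀ l m, l ≠ m → star (φ l) ⬝ᵥ φ m = 0) →
      (∀ l m, l ≠ m → star (ψ l) ⬝ᵥ ψ m = 0) →
      ∃ b : Mat d, choi (adFun b) =
        Matrix.vecMulVec (∑ l, tensorVec (φ l) (ψ l))
          (star (∑ l, tensorVec (φ l) (ψ l)))) :=
  stmt3_general d a
end
end

section
/- Let d ≥ 1, let k be a positive integer with k ≤ d, and let a ∈ M_d(ℂ) with rank(a) = k. Then the map Ad_a is k-superpositive, but Ad_a cannot be written as a finite sum ∑_{i=1}^n Ad_{a_i} with all a_i ∈ M_d(ℂ) of rank at most k−1. In particular the cone of (k−1)-superpositive maps is strictly contained in the cone of k-superpositive maps for 2 ≤ k ≤ d. -/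
open Matrix Kronecker
open scoped ComplexOrder

noncomputable section

/-!
The identity `Ad_a = ∑ᵢ Ad_{bᵢ}`, evaluated on matrix units, says that the rank-one positive
matrix `vec(a) vec(a)*` equals `∑ᵢ vec(bᵢ) vec(bᵢ)*`. Such a decomposition forces every `bᵢ`
to be a scalar multiple of `a`, so each `bᵢ` has rank either `rank a` or `0`; they cannot all
vanish, hence `Ad_a` is not `(rank a - 1)`-superpositive. A diagonal `0/1` matrix of rank `k'`
then separates the two cones.
-/
theorem eq_smul_of_star_mul_eq_sum {K ι κ : Type*} [Field K] [StarRing K] [PartialOrder K]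
    [StarOrderedRing K] [Fintype κ] {v : ι → K} {w : κ → ι → K}
    (h : ∀ x y, star (v x) * v y = ∑ j, star (w j x) * w j y) {x₀ : ι} (hx₀ : v x₀ ≠ 0)
    (j : κ) : w j = (w j x₀ / v x₀) • v := by
  have hprop : ∀ y, v x₀ * w j y = v y * w j x₀ := by
    intro y
    let c : κ → K := fun i => v x₀ * w i y - v y * w i x₀
    have hc : star c ⬝ᵥ c = 0 := by
      calc star c ⬝ᵥ c
          = star (v x₀) * v x₀ * ∑ i, star (w i y) * w i y
            - star (v x₀) * v y * ∑ i, star (w i y) * w i x₀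
            - star (v y) * v x₀ * ∑ i, star (w i x₀) * w i y
            + star (v y) * v y * ∑ i, star (w i x₀) * w i x₀ := by
            simp only [dotProduct, Pi.star_apply, c, Finset.mul_sum, ← Finset.sum_sub_distrib,
              ← Finset.sum_add_distrib, star_sub, star_mul']
            exact Finset.sum_congr rfl fun i _ => by ring
        _ = 0 := by simp only [← h]; ring
    exact sub_eq_zero.1 (congrFun (dotProduct_star_self_eq_zero.1 hc) j)
  ext y
  rw [Pi.smul_apply, smul_eq_mul, div_mul_eq_mul_div, eq_div_iff hx₀]
  linear_combination hprop y

theorem conjTranspose_mul_single_mul_apply {R m n : Type*} [Semiring R] [StarRing R]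
    [Fintype m] [DecidableEq m] (a b : Matrix m n R) (p q : m) (r s : n) :
    (aᴴ * Matrix.single p q (1 : R) * b) r s = star (a p r) * b q s := by
  simp [Matrix.mul_apply, Matrix.single, ite_and, Finset.sum_ite_eq]

lemma star_mul_eq_sum_of_adFun_eq_sum {d n : ℕ} {a : Mat d} {b : Fin n → Mat d}
    (h : ∀ x, adFun a x = ∑ i, (b i)ᴴ * x * b i) (x y : Fin d × Fin d) :
    star (a x.1 x.2) * a y.1 y.2 = ∑ i, star (b i x.1 x.2) * b i y.1 y.2 := by
  have := congrFun (congrFun (h (Matrix.single x.1 y.1 1)) x.2) y.2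
  simpa only [adFun, Matrix.sum_apply, conjTranspose_mul_single_mul_apply] using this

lemma kSuperpositive_adFun {d : ℕ} (a : Mat d) : kSuperpositive d a.rank (adFun a) :=
  ⟨1, fun _ => a, fun _ => le_rfl, fun x => by simp [adFun]⟩

lemma kSuperpositive.mono {d j k : ℕ} {Φ : Mat d → Mat d} (hjk : j ≤ k)
    (hΦ : kSuperpositive d j Φ) : kSuperpositive d k Φ :=
  let ⟨n, b, hb, hΦb⟩ := hΦ
  ⟨n, b, fun i => (hb i).trans hjk, hΦb⟩

lemma not_kSuperpositive_adFun_of_lt_rank {d k : ℕ} {a : Mat d} (hk : k < a.rank) :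
    ¬ kSuperpositive d k (adFun a) := by
  rintro ⟨n, b, hb, hab⟩
  have h := star_mul_eq_sum_of_adFun_eq_sum hab
  obtain ⟨x₀, hx₀⟩ : ∃ x : Fin d × Fin d, a x.1 x.2 ≠ 0 := by
    by_contra! h0
    have : a = 0 := Matrix.ext fun p r => h0 (p, r)
    simp [this] at hk
  -- otherwise `b i` would be a nonzero multiple of `a`, of the same rank
  have hb_zero : ∀ i, b i x₀.1 x₀.2 = 0 := by
    intro i
    by_contra hi
    have hbi : b i = (b i x₀.1 x₀.2 / a x₀.1 x₀.2) • a := Matrix.ext fun p r =>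
      congrFun (eq_smul_of_star_mul_eq_sum (v := fun x => a x.1 x.2)
        (w := fun i x => b i x.1 x.2) h hx₀ i) (p, r)
    have := hb i
    rw [hbi, rank_smul_of_mem_nonZeroDivisors _
      (mem_nonZeroDivisors_of_ne_zero (div_ne_zero hi hx₀))] at this
    omega
  have := h x₀ x₀
  simp [hb_zero, hx₀] at this

lemma exists_rank_eq {d k : ℕ} (hkd : k ≤ d) : ∃ a : Mat d, a.rank = k := by
  classical
  refine ⟨Matrix.diagonal fun i => if (i : ℕ) < k then 1 else 0, ?_⟩
  rw [Matrix.rank_diagonal, Fintype.card_subtype]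
  simpa [hkd] using Fin.card_filter_val_lt (n := d) (m := k)

theorem stmt4_general (d k : ℕ) (hk : 1 ≤ k)
    (a : Mat d) (ha : a.rank = k) :
    (kSuperpositive d k (adFun a) ∧ ¬ kSuperpositive d (k - 1) (adFun a)) ∧
    (∀ k' : ℕ, 2 ≤ k' → k' ≤ d →
      {Φ : Mat d → Mat d | kSuperpositive d (k' - 1) Φ} ⊂
        {Φ : Mat d → Mat d | kSuperpositive d k' Φ}) := by
  refine ⟨⟨ha ▸ kSuperpositive_adFun a, not_kSuperpositive_adFun_of_lt_rank (by omega)⟩, ?_⟩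
  intro k' hk' hk'd
  obtain ⟨b, hb⟩ := exists_rank_eq hk'd
  refine Set.ssubset_iff_exists.2 ⟨fun Φ => kSuperpositive.mono (Nat.sub_le k' 1), adFun b, ?_, ?_⟩
  · exact hb ▸ kSuperpositive_adFun b
  · exact not_kSuperpositive_adFun_of_lt_rank (by omega)

/-- if `rank a = k` then `Ad_a` is `k`-superpositive but not
`(k-1)`-superpositive; in particular the cone of `(k-1)`-superpositive maps is strictly
contained in the cone of `k`-superpositive maps for `2 ≤ k ≤ d`. -/
theorem stmt4 (d k : ℕ) (hd : 1 ≤ d) (hk : 1 ≤ k) (hkd : k ≤ d)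
    (a : Mat d) (ha : a.rank = k) :
    (kSuperpositive d k (adFun a) ∧ ¬ kSuperpositive d (k - 1) (adFun a)) ∧
    (∀ k' : ℕ, 2 ≤ k' → k' ≤ d →
      {Φ : Mat d → Mat d | kSuperpositive d (k' - 1) Φ} ⊂
        {Φ : Mat d → Mat d | kSuperpositive d k' Φ}) :=
  stmt4_general d k hk a ha
end
end

section
/- Let d ≥ 1 and k ≥ 1, and let Φ be a linear map on the d×d complex matrices. Then Φ is k-superpositive if and only if its Choi matrix C_Φ is k-separable. -/
open Matrix Kronecker
open scoped ComplexOrder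

noncomputable section

/-!
The Choi matrix of `Ad_a` is the rank-one matrix `w w*` with `w = vec a*`, i.e.
`w (i, α) = conj (a i α)`, and a Schmidt decomposition of `vec b` of length `k` is the same as a
factorisation `b = X Y` through `Fin k`, so the Schmidt rank of `vec b` is the rank of `b`.
As `Φ ↦ C_Φ` is additive and injective on linear maps (it records `Φ` on the matrix units),
writing `Φ = ∑ Ad_{aᵢ}` with `rank aᵢ ≤ k` is the same as writing `C_Φ = ∑ wᵢ wᵢ*` with
`wᵢ = vec aᵢ*` of Schmidt rank at most `k`.
-/

theorem Matrix.rank_le_iff_exists_eq_mul {K m n : Type*} [Field K] [Fintype n]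
    [DecidableEq n] (b : Matrix m n K) (k : ℕ) :
    b.rank ≤ k ↔ ∃ (X : Matrix m (Fin k) K) (Y : Matrix (Fin k) n K), b = X * Y := by
  constructor
  · intro hb
    have hW : Module.finrank K (LinearMap.range b.mulVecLin) ≤ Module.finrank K (Fin k → K) := by
      simpa [Matrix.rank] using hb
    obtain ⟨f, hf⟩ := (finrank_le_iff_exists_linearMap).mp hW
    obtain ⟨g, hg⟩ := f.exists_leftInverse_of_injective (LinearMap.ker_eq_bot.mpr hf)
    refine ⟨LinearMap.toMatrix' ((LinearMap.range b.mulVecLin).subtype ∘ₗ g),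
      LinearMap.toMatrix' (f ∘ₗ b.mulVecLin.rangeRestrict), ?_⟩
    rw [← LinearMap.toMatrix'_comp, LinearMap.comp_assoc, ← LinearMap.comp_assoc _ f g, hg,
      LinearMap.id_comp, LinearMap.subtype_comp_codRestrict]
    exact (LinearMap.toMatrix'_toLin' b).symm
  · rintro ⟨X, Y, rfl⟩
    exact (X.rank_mul_le_left Y).trans (X.rank_le_card_width.trans (Fintype.card_fin k).le)

theorem schmidtRankLE_vec_iff {d k : ℕ} (b : Mat d) :
    SchmidtRankLE d k b.vec ↔ b.rank ≤ k := by
  rw [Matrix.rank_le_iff_exists_eq_mul]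
  constructor
  · rintro ⟨φ, ψ, h⟩
    refine ⟨Matrix.of fun α l => ψ l α, Matrix.of fun l i => φ l i, ?_⟩
    ext α i
    simpa [Matrix.mul_apply, mul_comm] using congrFun h (i, α)
  · rintro ⟨X, Y, rfl⟩
    refine ⟨fun l i => Y l i, fun l α => X α l, ?_⟩
    ext ⟨i, α⟩
    simp [Matrix.vec, Matrix.mul_apply, mul_comm]

theorem choi_adFun {d : ℕ} (a : Mat d) :
    choi (adFun a) = vecMulVec aᴴ.vec (star aᴴ.vec) := by
  ext ⟨i, α⟩ ⟨j, β⟩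
  simp [choi, adFun, Matrix.vec, vecMulVec_apply, Matrix.mul_apply, Matrix.single, ite_and]

theorem choi_sum {d n : ℕ} (f : Fin n → Mat d → Mat d) :
    choi (fun x => ∑ i, f i x) = ∑ i, choi (f i) := by
  ext p q
  simp [choi, Matrix.sum_apply]

theorem choi_injective (d : ℕ) : Function.Injective fun Φ : MatMap d => choi ⇑Φ := by
  intro Φ Ψ h
  refine Matrix.ext_linearMap ℂ fun i j => LinearMap.ext_ring ?_
  ext α β
  exact congrFun (congrFun h (i, α)) (j, β)

theorem stmt5_general (d k : ℕ) (Φ : MatMap d) :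
    kSuperpositive d k ⇑Φ ↔ kSeparable d k (choi ⇑Φ) := by
  constructor
  · rintro ⟨n, a, hrank, hΦ⟩
    refine ⟨n, fun i => (a i)ᴴ.vec, fun i => ?_, ?_⟩
    · rw [schmidtRankLE_vec_iff, Matrix.rank_conjTranspose]
      exact hrank i
    · rw [show ⇑Φ = fun x => ∑ i, adFun (a i) x from funext hΦ, choi_sum]
      simp only [choi_adFun]
  · rintro ⟨n, v, hv, hchoi⟩
    set a : Fin n → Mat d := fun i => (Matrix.of fun α j => v i (j, α))ᴴ with ha
    have hva : ∀ i, v i = (a i)ᴴ.vec := fun i => by ext ⟨j, α⟩; simp [ha, Matrix.vec]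
    have hΦ : Φ = ∑ i, LinearMap.mulLeftRight ℂ ((a i)ᴴ, a i) := by
      refine choi_injective d ?_
      have hsum : ⇑(∑ i, LinearMap.mulLeftRight ℂ ((a i)ᴴ, a i)) = fun x => ∑ i, adFun (a i) x :=
        funext fun x => by simp [LinearMap.sum_apply, adFun]
      simp only [hchoi, hsum, choi_sum, choi_adFun, hva]
    refine ⟨n, a, fun i => ?_, fun x => by simp [hΦ]⟩
    rw [← Matrix.rank_conjTranspose, ← schmidtRankLE_vec_iff, ← hva]
    exact hv i

/-- `Φ` is `k`-superpositive iff its Choi matrix is `k`-separable. -/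
theorem stmt5 (d k : ℕ) (hd : 1 ≤ d) (hk : 1 ≤ k) (Φ : MatMap d) :
    kSuperpositive d k ⇑Φ ↔ kSeparable d k (choi ⇑Φ) :=
  stmt5_general d k Φ
end
end

section
/- Let d ≥ 1 and k ≥ 1. A Hermitian matrix A indexed by Fin d × Fin d is k-block positive if and only if Tr(A b) ≥ 0 for every k-separable matrix b indexed by Fin d × Fin d; that is, the set of k-block positive matrices equals the dual cone of the set of k-separable matrices with respect to the Hilbert–Schmidt pairing on Hermitian matrices. -/
open Matrix Kronecker
open scoped ComplexOrder

noncomputable section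

theorem Matrix.trace_mul_vecMulVec {n R : Type*} [Fintype n] [CommSemiring R]
    (A : Matrix n n R) (v w : n → R) : (A * vecMulVec v w).trace = w ⬝ᵥ A *ᵥ v := by
  rw [mul_vecMulVec, trace_vecMulVec, dotProduct_comm]

theorem kSeparable_vecMulVec_self {d k : ℕ} {v : Fin d × Fin d → ℂ} (hv : SchmidtRankLE d k v) :
    kSeparable d k (vecMulVec v (star v)) :=
  ⟨1, fun _ => v, fun _ => hv, by simp⟩

theorem stmt6_general (d k : ℕ) (A : Mat2 d) (hA : A.IsHermitian) :
    kBlockPositive d k A ↔ ∀ b : Mat2 d, kSeparable d k b → 0 ≤ (A * b).trace := by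
  constructor
  · rintro ⟨-, hpos⟩ b ⟨n, v, hv, rfl⟩
    simp only [Finset.mul_sum, trace_sum, trace_mul_vecMulVec]
    exact Finset.sum_nonneg fun i _ => hpos (v i) (hv i)
  · intro hdual
    refine ⟨hA, fun v hv => ?_⟩
    simpa only [trace_mul_vecMulVec] using hdual _ (kSeparable_vecMulVec_self hv)

/-- a Hermitian matrix `A` is `k`-block positive iff `Tr(A b) ≥ 0` for every
`k`-separable `b` (i.e. `k`-block positive matrices form the dual cone of the
`k`-separable ones). -/
theorem stmt6 (d k : ℕ) (hd : 1 ≤ d) (hk : 1 ≤ k) (A : Mat2 d) (hA : A.IsHermitian) :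
    kBlockPositive d k A ↔ ∀ b : Mat2 d, kSeparable d k b → 0 ≤ (A * b).trace :=
  stmt6_general d k A hA
end
end

section
/- Let d ≥ 1 and k ≥ 1. If Φ is a k-superpositive linear map on the d×d complex matrices and Ψ is a k-positive linear map on the d×d complex matrices, then both compositions Ψ∘Φ and Φ∘Ψ are k-superpositive. -/
open Matrix Kronecker
open scoped ComplexOrder

noncomputable section

/-!
Factor `a = P * Q` through `ℂ^k`. Then `Ψ ∘ Ad_a = (Ψ ∘ Ad_Q) ∘ Ad_P` and `Ad_a ∘ Ψ = Ad_Q ∘ (Ad_P ∘ Ψ)`,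
where `Ψ ∘ Ad_Q` has domain `M_k` and `Ad_P ∘ Ψ` has codomain `M_k`. Both are completely positive: the
Choi matrix of `Ψ ∘ Ad_Q` is `(id_k ⊗ Ψ)` of a rank-one positive matrix, and the quadratic form of the
Choi matrix of `Ad_P ∘ Ψ` at `vec U` equals that of `Ψ ∘ Ad_U` at `vec P`, which is nonnegative by
the first case. A Kraus decomposition `∑ Ad_{V_r}` of either map, with `V_r` of size `k × d` resp.
`d × k`, then exhibits the composition as a sum of `Ad_{P V_r}` resp. `Ad_{V_r Q}`, all of rank at
most `k`.
-/

namespace Matrix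

theorem exists_eq_mul_of_rank_le {m n K : Type*} [Fintype m] [Fintype n] [Field K]
    (A : Matrix m n K) {k : ℕ} (h : A.rank ≤ k) :
    ∃ (B : Matrix m (Fin k) K) (C : Matrix (Fin k) n K), A = B * C := by
  rw [rank_eq_finrank_span_cols] at h
  obtain ⟨f, -, hf, -⟩ := Submodule.exists_fun_fin_finrank_span_eq K (Set.range A.col)
  set s : Fin k → m → K := Function.extend (Fin.castLE h) f 0
  have hcol : ∀ j, A.col j ∈ Submodule.span K (Set.range s) := by
    refine fun j => Submodule.span_mono ?_ (hf ▸ Submodule.subset_span (Set.mem_range_self j))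
    rintro _ ⟨i, rfl⟩
    exact ⟨Fin.castLE h i, (Fin.castLE_injective h).extend_apply f 0 i⟩
  choose c hc using fun j => (Submodule.mem_span_range_iff_exists_fun K).mp (hcol j)
  refine ⟨of fun i l => s l i, of fun l j => c j l, ?_⟩
  ext i j
  simpa [mul_apply, Finset.sum_apply, mul_comm] using (congrFun (hc j) i).symm

theorem posSemidef_of_forall_dotProduct_mulVec_nonneg {n : Type*} [Fintype n] {A : Matrix n n ℂ}
    (h : ∀ x, 0 ≤ star x ⬝ᵥ A *ᵥ x) : A.PosSemidef := by
  classical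
  refine .of_dotProduct_mulVec_nonneg ?_ h
  rw [← isSymmetric_toEuclideanLin_iff, LinearMap.isSymmetric_iff_inner_map_self_real]
  intro v
  have hv := IsSelfAdjoint.of_nonneg (h v.ofLp)
  have e : v.ofLp ⬝ᵥ star (A *ᵥ v.ofLp) = star (star v.ofLp ⬝ᵥ A *ᵥ v.ofLp) := by
    rw [← star_dotProduct_star, star_star, dotProduct_comm]
  simp only [toLpLin_apply, EuclideanSpace.inner_eq_star_dotProduct, e, hv.star_eq]
  exact hv.star_eq

theorem star_dotProduct_conjTranspose_mul_mul_mulVec {m n : Type*} [Fintype m] [Fintype n]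
    (A : Matrix m m ℂ) (B : Matrix m n ℂ) (x : n → ℂ) :
    star x ⬝ᵥ (Bᴴ * A * B) *ᵥ x = star (B *ᵥ x) ⬝ᵥ A *ᵥ (B *ᵥ x) := by
  simp only [star_mulVec, dotProduct_mulVec, vecMul_vecMul, Matrix.mul_assoc]

variable {m n : Type*} [Fintype m]

def adLinearMap (A : Matrix m n ℂ) : Matrix m m ℂ →ₗ[ℂ] Matrix n n ℂ where
  toFun x := Aᴴ * x * A
  map_add' x y := by simp [Matrix.mul_add, Matrix.add_mul]
  map_smul' c x := by simp

@[simp]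
theorem adLinearMap_apply (A : Matrix m n ℂ) (x : Matrix m m ℂ) :
    adLinearMap A x = Aᴴ * x * A :=
  rfl

variable [DecidableEq m]

theorem conjTranspose_mul_single_mul (A : Matrix m n ℂ) (i j : m) :
    Aᴴ * single i j (1 : ℂ) * A = vecMulVec (star (A i)) (A j) := by
  ext a b
  simp [mul_apply, single, vecMulVec_apply, ite_and, Finset.sum_ite_eq]

theorem _root_.LinearMap.apply_eq_sum_smul_single (L : Matrix m m ℂ →ₗ[ℂ] Matrix n n ℂ)
    (x : Matrix m m ℂ) : L x = ∑ i, ∑ j, x i j • L (single i j 1) := by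
  conv_lhs => rw [matrix_eq_sum_single x]
  simp only [map_sum, ← map_smul, smul_single, smul_eq_mul, mul_one]

def choiMatrix (L : Matrix m m ℂ → Matrix n n ℂ) : Matrix (m × n) (m × n) ℂ :=
  of fun p q => L (single p.1 q.1 1) p.2 q.2

variable [Fintype n]

open scoped MatrixOrder in
theorem exists_kraus_of_posSemidef_choiMatrix (L : Matrix m m ℂ →ₗ[ℂ] Matrix n n ℂ)
    (hL : (choiMatrix L).PosSemidef) :
    ∃ V : m × n → Matrix m n ℂ, ∀ x, L x = ∑ r, (V r)ᴴ * x * V r := by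
  classical
  obtain ⟨B, hB⟩ := CStarAlgebra.nonneg_iff_eq_star_mul_self.mp hL.nonneg
  set V : m × n → Matrix m n ℂ := fun r => of fun i a => B r (i, a)
  have hsingle : ∀ i j, L (single i j 1) = ∑ r, (V r)ᴴ * single i j (1 : ℂ) * V r :=
    fun i j => by
      ext a b
      simpa [conjTranspose_mul_single_mul, sum_apply, vecMulVec_apply, V, choiMatrix, mul_apply]
        using congrFun (congrFun hB (i, a)) (j, b)
  refine ⟨V, fun x => ?_⟩
  calc L x = ∑ i, ∑ j, ∑ r, x i j • ((V r)ᴴ * single i j (1 : ℂ) * V r) := by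
        simp_rw [L.apply_eq_sum_smul_single x, hsingle, Finset.smul_sum]
    _ = ∑ r, ∑ i, ∑ j, x i j • ((V r)ᴴ * single i j (1 : ℂ) * V r) :=
        (Finset.sum_congr rfl fun _ _ => Finset.sum_comm).trans Finset.sum_comm
    _ = ∑ r, (V r)ᴴ * x * V r :=
        Finset.sum_congr rfl fun r _ => ((adLinearMap (V r)).apply_eq_sum_smul_single x).symm

theorem choiMatrix_adLinearMap_comp {n' : Type*} [Fintype n']
    (L : Matrix m m ℂ →ₗ[ℂ] Matrix n n ℂ) (B : Matrix n n' ℂ) :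
    choiMatrix (adLinearMap B ∘ₗ L)
      = ((1 : Matrix m m ℂ) ⊗ₖ B)ᴴ * choiMatrix L * ((1 : Matrix m m ℂ) ⊗ₖ B) := by
  ext ⟨i, a⟩ ⟨j, b⟩
  simp [choiMatrix, mul_apply, one_apply, Fintype.sum_prod_type, apply_ite (starRingEnd ℂ),
    ite_mul, Finset.sum_ite_eq']

theorem choiMatrix_comp_adLinearMap [DecidableEq n] {m' : Type*} [Fintype m'] [DecidableEq m']
    (L : Matrix m m ℂ →ₗ[ℂ] Matrix n n ℂ) (A : Matrix m' m ℂ) :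
    choiMatrix (L ∘ₗ adLinearMap A)
      = (Aᵀ ⊗ₖ (1 : Matrix n n ℂ))ᴴ * choiMatrix L * (Aᵀ ⊗ₖ (1 : Matrix n n ℂ)) := by
  ext ⟨i, a⟩ ⟨j, b⟩
  rw [choiMatrix, of_apply, LinearMap.comp_apply, L.apply_eq_sum_smul_single, adLinearMap_apply,
    conjTranspose_mul_single_mul, Finset.sum_comm]
  simp [choiMatrix, mul_apply, one_apply, Fintype.sum_prod_type, apply_ite (starRingEnd ℂ),
    ite_mul, Finset.sum_ite_eq', sum_apply, vecMulVec_apply, Finset.sum_mul, mul_right_comm]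

end Matrix

section Superpositive

variable {d k : ℕ}

theorem kSuperpositive_of_fintype {Φ : Mat d → Mat d} {ι : Type*} [Fintype ι] (a : ι → Mat d)
    (ha : ∀ i, (a i).rank ≤ k) (hΦ : ∀ x, Φ x = ∑ i, (a i)ᴴ * x * a i) :
    kSuperpositive d k Φ :=
  ⟨_, a ∘ (Fintype.equivFin ι).symm, fun _ => ha _,
    fun x => by rw [hΦ, ← Equiv.sum_comp (Fintype.equivFin ι).symm]; rfl⟩

theorem kSuperpositive_sum {ι : Type*} [Fintype ι] {Φ : ι → Mat d → Mat d}
    (h : ∀ i, kSuperpositive d k (Φ i)) : kSuperpositive d k fun x => ∑ i, Φ i x := by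
  choose n a ha hΦ using h
  exact kSuperpositive_of_fintype (fun p : Σ i, Fin (n i) => a p.1 p.2) (fun p => ha _ _)
    fun x => by simp [hΦ, Fintype.sum_sigma]

namespace kPositive

variable {Ψ : MatMap d} (hΨ : kPositive d k Ψ)
include hΨ

theorem posSemidef_choiMatrix_comp_adLinearMap (Q : Matrix (Fin k) (Fin d) ℂ) :
    (choiMatrix (Ψ ∘ₗ adLinearMap Q)).PosSemidef := by
  set w : Fin k × Fin d → ℂ := fun p => star (Q p.1 p.2)
  have h : choiMatrix (Ψ ∘ₗ adLinearMap Q) = tensId (Fin k) Ψ (vecMulVec w (star w)) := by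
    ext p q
    simp [choiMatrix, tensId, conjTranspose_mul_single_mul, w, vecMulVec]
  exact h ▸ hΨ _ (posSemidef_vecMulVec_self_star w)

theorem posSemidef_choiMatrix_adLinearMap_comp (P : Matrix (Fin d) (Fin k) ℂ) :
    (choiMatrix (adLinearMap P ∘ₗ Ψ)).PosSemidef := by
  refine posSemidef_of_forall_dotProduct_mulVec_nonneg fun u => ?_
  obtain ⟨U, rfl⟩ := vec_bijective.2 u
  have h := (hΨ.posSemidef_choiMatrix_comp_adLinearMap U).dotProduct_mulVec_nonneg (vec P)
  have hvec : (1 ⊗ₖ P) *ᵥ vec U = (Uᵀ ⊗ₖ 1) *ᵥ vec P := by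
    rw [kronecker_mulVec_vec, kronecker_mulVec_vec]
    simp
  rwa [choiMatrix_comp_adLinearMap, star_dotProduct_conjTranspose_mul_mul_mulVec, ← hvec,
    ← star_dotProduct_conjTranspose_mul_mul_mulVec, ← choiMatrix_adLinearMap_comp] at h

theorem kSuperpositive_comp_adFun {a : Mat d} (ha : a.rank ≤ k) :
    kSuperpositive d k fun x => Ψ (adFun a x) := by
  obtain ⟨P, Q, rfl⟩ := a.exists_eq_mul_of_rank_le ha
  obtain ⟨V, hV⟩ :=
    exists_kraus_of_posSemidef_choiMatrix _ (hΨ.posSemidef_choiMatrix_comp_adLinearMap Q)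
  refine kSuperpositive_of_fintype (fun r => P * V r)
    (fun r => (rank_mul_le_left _ _).trans (rank_le_width P)) fun x => ?_
  simpa [adFun, conjTranspose_mul, Matrix.mul_assoc] using hV (Pᴴ * x * P)

theorem kSuperpositive_adFun_comp {a : Mat d} (ha : a.rank ≤ k) :
    kSuperpositive d k fun x => adFun a (Ψ x) := by
  obtain ⟨P, Q, rfl⟩ := a.exists_eq_mul_of_rank_le ha
  obtain ⟨W, hW⟩ :=
    exists_kraus_of_posSemidef_choiMatrix _ (hΨ.posSemidef_choiMatrix_adLinearMap_comp P)
  refine kSuperpositive_of_fintype (fun r => W r * Q)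
    (fun r => (rank_mul_le_right _ _).trans (rank_le_height Q)) fun x => ?_
  have := congrArg (fun y => Qᴴ * y * Q) (hW x)
  simpa [adFun, conjTranspose_mul, Matrix.mul_assoc, Matrix.mul_sum, Matrix.sum_mul] using this

end kPositive

end Superpositive

theorem stmt11_general (d k : ℕ) (Φ Ψ : MatMap d)
    (hΦ : kSuperpositive d k ⇑Φ) (hΨ : kPositive d k ⇑Ψ) :
    kSuperpositive d k ⇑(Ψ.comp Φ) ∧ kSuperpositive d k ⇑(Φ.comp Ψ) := by
  obtain ⟨n, a, ha, hΦa⟩ := hΦ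
  have hΨΦ : ⇑(Ψ.comp Φ) = fun x => ∑ i, Ψ (adFun (a i) x) :=
    funext fun x => by simp [hΦa, adFun]
  have hΦΨ : ⇑(Φ.comp Ψ) = fun x => ∑ i, adFun (a i) (Ψ x) :=
    funext fun x => by simp [hΦa, adFun]
  rw [hΨΦ, hΦΨ]
  exact ⟨kSuperpositive_sum fun i => hΨ.kSuperpositive_comp_adFun (ha i),
    kSuperpositive_sum fun i => hΨ.kSuperpositive_adFun_comp (ha i)⟩

/-- the composition (in either order) of a `k`-superpositive map with a
`k`-positive map is `k`-superpositive. -/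
theorem stmt11 (d k : ℕ) (hd : 1 ≤ d) (hk : 1 ≤ k) (Φ Ψ : MatMap d)
    (hΦ : kSuperpositive d k ⇑Φ) (hΨ : kPositive d k ⇑Ψ) :
    kSuperpositive d k ⇑(Ψ.comp Φ) ∧ kSuperpositive d k ⇑(Φ.comp Ψ) :=
  stmt11_general d k Φ Ψ hΦ hΨ
end
end
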